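/- arXiv:2303.03713 — 3 statements merged into one kernel-verified Lean document; each statement's English description precedes it below -/
import Mathlib

section
/- Let k = -7/3, κ = (2k+3)/3 = -5/9, and define P(j,h) = -(k+2)(k+3)h + ((k+3)h - 2(k+2)²)(j+κ) + 3(k+2)(j+κ)² - (j+κ)³. For λ ∈ ℂ set h_λ = λ(λ+1)/2 and W_λ = -λ(λ+1)(2λ+1)/6 (so that w_λ = W_λ/√2), and let α = 2√2/9 (which equals (k+3)^{3/2}/√3 at k = -7/3). Then for all j, λ ∈ ℂ: α·(W_λ/√2) + P(j, h_λ) = -(j - (3λ+5)/9)(j - (3λ+2)/9)(j + (6λ+1)/9). Equivalently, (2/9)·W_λ + P(j,h_λ) = -(j - (3λ+5)/9)(j - (3λ+2)/9)(j + (6λ+1)/9). -/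
/-- The polynomial P_k(j, h) governing the G⁻₀-action, with κ = (2k+3)/3. -/
noncomputable def PBP (k j h : ℂ) : ℂ :=
  -(k + 2) * (k + 3) * h + ((k + 3) * h - 2 * (k + 2) ^ 2) * (j + (2 * k + 3) / 3)
    + 3 * (k + 2) * (j + (2 * k + 3) / 3) ^ 2 - (j + (2 * k + 3) / 3) ^ 3

/-- Cubic factorization at the nonadmissible level k = -7/3. -/
theorem cubic_factorization_level_neg73 (j lam : ℂ) :
    (2 * (Real.sqrt 2 : ℂ) / 9) * ((-lam * (lam + 1) * (2 * lam + 1) / 6) / (Real.sqrt 2 : ℂ))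
        + PBP (-7/3) j (lam * (lam + 1) / 2)
      = -(j - (3 * lam + 5) / 9) * (j - (3 * lam + 2) / 9) * (j + (6 * lam + 1) / 9) ∧
    (2 / 9 : ℂ) * (-lam * (lam + 1) * (2 * lam + 1) / 6)
        + PBP (-7/3) j (lam * (lam + 1) / 2)
      = -(j - (3 * lam + 5) / 9) * (j - (3 * lam + 2) / 9) * (j + (6 * lam + 1) / 9) := by
  have hs : (Real.sqrt 2 : ℂ) ≠ 0 := by
    exact_mod_cast Real.sqrt_ne_zero'.mpr (by norm_num)
  constructor <;> · unfold PBP; field_simp; ring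
end

section
/- Let k ∈ ℂ with k ≠ -3, set κ = (2k+3)/3 and t = k+3, and let r, s be positive integers. Define j' = (r+2s-2t)/3, h = (r²+rs+s²-3)/(3t) - r - s + 2, and P(j,h) = -(k+2)t·h + (t·h - 2(k+2)²)(j+κ) + 3(k+2)(j+κ)² - (j+κ)³. Then P(j', h) = ((r-s)/3)·((2r+s)/3 - t)·((r+2s)/3 - t). -/
theorem P_at_conjugate_hw_vector (k : ℂ) (hk : k ≠ -3) (r s : ℕ)
    (hr : 0 < r) (hs : 0 < s) :
    PBP k (((r : ℂ) + 2 * s - 2 * (k + 3)) / 3)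
        (((r : ℂ) ^ 2 + r * s + s ^ 2 - 3) / (3 * (k + 3)) - r - s + 2)
      = (((r : ℂ) - s) / 3) * ((2 * (r : ℂ) + s) / 3 - (k + 3))
          * (((r : ℂ) + 2 * s) / 3 - (k + 3)) := by
  have h3 : (k:ℂ) + 3 ≠ 0 := by intro h; apply hk; linear_combination h
  have hth : (k + 3) * (((r : ℂ) ^ 2 + r * s + s ^ 2 - 3) / (3 * (k + 3)) - r - s + 2)
      = ((r : ℂ) ^ 2 + r * s + s ^ 2 - 3) / 3 - (k + 3) * (r + s - 2) := by
    field_simp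
    ring
  unfold PBP
  linear_combination (-(k + 2) + ((((r:ℂ) + 2 * s - 2 * (k + 3)) / 3) + (2 * k + 3) / 3)) * hth
end

section
/- Let κ be a nonzero complex number and let 𝔤 be the Lie algebra with basis {J_n : n ∈ ℤ} ∪ {C} and brackets [J_m, J_n] = m·δ_{m+n,0}·κ·C, [J_m, C] = 0. Let V be a 𝔤-module on which C acts as the identity, graded by an operator L₀ satisfying [L₀, J_n] = -n J_n, such that V is the direct sum of its (generalised) L₀-eigenspaces and each element v ∈ V satisfies J_n v = 0 for all sufficiently large n (smoothness). If V has a nonzero finite-dimensional graded subspace V_Δ, then every eigenvalue of the operator A = J_{-1}J_1 on V_Δ lies in κ·ℕ = {0, κ, 2κ, 3κ, ...}. -/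
/-- Eigenvalues of A = J₋₁J₁ on a finite-dimensional graded subspace of a
    smooth graded module over the rank-1 Heisenberg algebra lie in κ·ℕ. -/
theorem heisenberg_A_eigenvalues
    (κ : ℂ) (hκ : κ ≠ 0)
    (V : Type*) [AddCommGroup V] [Module ℂ V]
    (J : ℤ → Module.End ℂ V)
    (hcomm : ∀ m n : ℤ, J m * J n - J n * J m
      = (if m + n = 0 then (m : ℂ) * κ else 0) • (1 : Module.End ℂ V))
    (Vs : ℂ → Submodule ℂ V)
    (hindep : iSupIndep Vs)
    (hspan : ⨆ Δ, Vs Δ = ⊤)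
    (hgrade : ∀ (n : ℤ) (Δ : ℂ), ∀ v ∈ Vs Δ, J n v ∈ Vs (Δ - n))
    (hsmooth : ∀ v : V, ∃ N : ℤ, ∀ n ≥ N, J n v = 0)
    (Δ : ℂ) (hfin : FiniteDimensional ℂ (Vs Δ)) (hne : Vs Δ ≠ ⊥)
    (μ : ℂ) (v : V) (hv : v ∈ Vs Δ) (hv0 : v ≠ 0)
    (heig : (J (-1) * J 1) v = μ • v) :
    ∃ r : ℕ, μ = (r : ℂ) * κ := by
  by_contra hcon
  push_neg at hcon
  -- the vectors uₘ = J₁ᵐ v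
  set u : ℕ → V := fun m => ((J 1) ^ m) v with hu
  have hu_succ : ∀ m, u (m + 1) = J 1 (u m) := by
    intro m
    simp only [hu, pow_succ', Module.End.mul_apply]

  -- pointwise commutator relation J₋₁ J₁ = J₁ J₋₁ - κ
  have hpt : ∀ x : V, J (-1) (J 1 x) = J 1 (J (-1) x) - κ • x := by
    intro x
    have h := hcomm (-1) 1
    rw [if_pos (by norm_num)] at h
    have h2 := congrFun (congrArg DFunLike.coe h) x
    simp only [LinearMap.sub_apply, Module.End.mul_apply, LinearMap.smul_apply,
      Module.End.one_apply] at h2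
    have h3 : J (-1) (J 1 x) = J 1 (J (-1) x) + ((((-1 : ℤ) : ℂ)) * κ) • x := by
      rw [← h2]; abel
    rw [h3]
    push_cast
    module
  -- eigenvalue recursion: A uₘ = (μ - m κ) uₘ
  have hA : ∀ m : ℕ, J (-1) (J 1 (u m)) = (μ - (m : ℂ) * κ) • u m := by
    intro m
    induction m with
    | zero =>
      have : J (-1) (J 1 (u 0)) = (J (-1) * J 1) v := by
        simp [hu, Module.End.mul_apply]
      rw [this, heig]
      simp [hu]
    | succ m ih =>
      rw [hu_succ m, hpt (J 1 (u m)), ih, map_smul, ← hu_succ m]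
      push_cast
      module
  -- all uₘ are nonzero
  have hμ : ∀ m : ℕ, μ - (m : ℂ) * κ ≠ 0 := by
    intro m
    exact sub_ne_zero.mpr (hcon m)
  have hu0 : ∀ m, u m ≠ 0 := by
    intro m
    induction m with
    | zero => simpa [hu] using hv0
    | succ m ih =>
      intro h0
      have h1 := hA m
      rw [← hu_succ m, h0, map_zero] at h1
      rcases smul_eq_zero.mp h1.symm with h | h
      · exact hμ m h
      · exact ih h
  -- grading of uₘ
  have hugrade : ∀ m : ℕ, u m ∈ Vs (Δ - (m : ℂ)) := by
    intro m
    induction m with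
    | zero => simpa [hu] using hv
    | succ m ih =>
      have h := hgrade 1 (Δ - (m : ℂ)) (u m) ih
      rw [hu_succ m]
      have he : Δ - ((m + 1 : ℕ) : ℂ) = Δ - (m : ℂ) - ((1 : ℤ) : ℂ) := by
        push_cast; ring
      rw [he]
      exact h
  -- smoothness bound
  obtain ⟨N₀, hN₀⟩ := hsmooth v
  set N : ℤ := max N₀ 1 with hN
  have hN1 : 1 ≤ N := le_max_right _ _
  -- large modes kill all uₘ
  have hkill : ∀ n : ℤ, N ≤ n → ∀ m, J n (u m) = 0 := by
    intro n hn m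
    induction m with
    | zero =>
      simpa [hu] using hN₀ n (le_trans (le_max_left _ _) hn)
    | succ m ih =>
      have hc := hcomm n 1
      rw [if_neg (by omega)] at hc
      rw [zero_smul, sub_eq_zero] at hc
      have h2 := congrFun (congrArg DFunLike.coe hc) (u m)
      simp only [Module.End.mul_apply] at h2
      rw [hu_succ m, h2, ih, map_zero]
  -- the vectors w k = J_{-(N+k)} u_{N+k} ∈ Vs Δ
  have hNnn : (0 : ℤ) ≤ N := by omega
  set nk : ℕ → ℕ := fun k => N.toNat + k with hnkdef
  have hnk : ∀ k, ((nk k : ℕ) : ℤ) = N + k := by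
    intro k
    simp [hnkdef, Int.toNat_of_nonneg hNnn]
  set w : ℕ → V := fun k => J (-(N + k)) (u (nk k)) with hw
  have hwmem : ∀ k, w k ∈ Vs Δ := by
    intro k
    have h := hgrade (-(N + k)) (Δ - ((nk k : ℕ) : ℂ)) (u (nk k)) (hugrade (nk k))
    have he : Δ - ((nk k : ℕ) : ℂ) - ((-(N + k) : ℤ) : ℂ) = Δ := by
      have : ((nk k : ℕ) : ℂ) = ((N + (k : ℤ) : ℤ) : ℂ) := by
        exact_mod_cast congrArg (fun z : ℤ => (z : ℂ)) (hnk k)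
      rw [this]
      push_cast
      ring
    rwa [he] at h
  -- dual action: J_{N+k} w k' = δ_{k k'} (N+k)κ u_{nk k}
  have hJw : ∀ k k' : ℕ,
      J (N + k) (w k') = (if k = k' then ((N + (k : ℤ) : ℤ) : ℂ) * κ else 0) • u (nk k') := by
    intro k k'
    have hc := hcomm (N + k) (-(N + k'))
    have hiff : ((N + (k : ℤ)) + -(N + (k' : ℤ)) = 0) ↔ k = k' := by
      constructor
      · intro h; omega
      · intro h; subst h; ring
    have h2 := congrFun (congrArg DFunLike.coe hc) (u (nk k'))
    simp only [LinearMap.sub_apply, Module.End.mul_apply, LinearMap.smul_apply,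
      Module.End.one_apply] at h2
    have hz : J (N + k) (u (nk k')) = 0 := hkill (N + k) (by omega) (nk k')
    rw [hz, map_zero, sub_zero] at h2
    have hmain : J (N + k) (w k')
        = (if (N + (k : ℤ)) + -(N + (k' : ℤ)) = 0 then ((N + (k : ℤ) : ℤ) : ℂ) * κ else 0)
          • u (nk k') := by
      simpa [hw] using h2
    by_cases hkk : k = k'
    · rw [hmain, if_pos (hiff.mpr hkk), if_pos hkk]
    · rw [hmain, if_neg (fun h => hkk (hiff.mp h)), if_neg hkk]
  -- linear independence of the family k ↦ w k inside Vs Δ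
  set g : ℕ → (Vs Δ) := fun k => ⟨w k, hwmem k⟩ with hg
  have hli : LinearIndependent ℂ g := by
    rw [linearIndependent_iff']
    intro s c hsum i hi
    have h0 : J (N + i) ((Vs Δ).subtype (∑ j ∈ s, c j • g j)) = 0 := by
      rw [hsum, map_zero, map_zero]
    rw [map_sum, map_sum] at h0
    simp only [map_smul, Submodule.coe_subtype, hg] at h0
    have h1 : ∀ j ∈ s, j ≠ i → c j • J (N + i) (w j) = 0 := by
      intro j _ hj
      rw [hJw i j, if_neg (fun h => hj h.symm), zero_smul, smul_zero]
    have h2 : (∑ j ∈ s, c j • J (N + i) (w j)) = c i • J (N + i) (w i) := by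
      exact Finset.sum_eq_single_of_mem i hi h1
    rw [h2] at h0
    rw [hJw i i, if_pos rfl] at h0
    have hNk : ((N + (i : ℤ) : ℤ) : ℂ) * κ ≠ 0 := by
      apply mul_ne_zero _ hκ
      have : (N + (i : ℤ)) ≠ 0 := by omega
      exact_mod_cast this
    rcases smul_eq_zero.mp h0 with h | h
    · exact h
    · rcases smul_eq_zero.mp h with h' | h'
      · exact absurd h' hNk
      · exact absurd h' (hu0 (nk i))
  have : Finite ℕ := hli.finite
  exact absurd this (by simp [not_finite_iff_infinite]; infer_instance)
end
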